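/- arXiv:2410.16023 — 2 statements merged into one kernel-verified Lean document; each statement's English description precedes it below -/
import Mathlib

section
/- Let G = (V,E) be a finite simple graph with star number γ(G) = k. Let X be a nonempty finite set of new vertices disjoint from V, let p : X → V be any function, and let G' be the graph on V ∪ X whose edges are the edges of G together with the edges x p(x) for x ∈ X (so that each x ∈ X is a pendant vertex of G'). Then γ(G') ≤ k + 1. -/
open SimpleGraph

/-- A `k`-witness for a simple graph `G`: a positive weight function `w` on the vertices
together with `k` increasingly ordered intervals `[a i, b i]` of positive reals such that
two distinct vertices are adjacent iff the sum of their weights lies in ⋃ i, [a i, b i]. -/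
structure StarWitness {V : Type*} (G : SimpleGraph V) (k : ℕ) where
  w : V → ℝ
  a : Fin k → ℝ
  b : Fin k → ℝ
  w_pos : ∀ v, 0 < w v
  a_pos : ∀ i, 0 < a i
  a_le_b : ∀ i, a i ≤ b i
  ordered : ∀ i j : Fin k, i < j → b i < a j
  adj_iff : ∀ u v : V, u ≠ v →
    (G.Adj u v ↔ ∃ i : Fin k, a i ≤ w u + w v ∧ w u + w v ≤ b i)

/-- The star number `γ(G)` of a graph `G`: the smallest positive integer `k` such that
`G` admits a `k`-witness (i.e. `G` is a star-`k`-PCG). -/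
noncomputable def starNumber {V : Type*} (G : SimpleGraph V) : ℕ :=
  sInf {k | 0 < k ∧ Nonempty (StarWitness G k)}

/-- A witness is left-free if the weight of every non-edge exceeds `b 1` (the right endpoint
of the first interval). -/
def StarWitness.LeftFree {V : Type*} {G : SimpleGraph V} {k : ℕ}
    (W : StarWitness G k) : Prop :=
  ∀ u v : V, u ≠ v → ¬ G.Adj u v → ∀ i : Fin k, (i : ℕ) = 0 → W.b i < W.w u + W.w v

/-- A witness is right-free if the weight of every non-edge is below `a k` (the left endpoint
of the last interval). -/
def StarWitness.RightFree {V : Type*} {G : SimpleGraph V} {k : ℕ}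
    (W : StarWitness G k) : Prop :=
  ∀ u v : V, u ≠ v → ¬ G.Adj u v → ∀ i : Fin k, (i : ℕ) = k - 1 → W.w u + W.w v < W.a i

/-- A witness is in normal form if all weights are pairwise distinct and no doubled weight
equals the sum of the weights of two distinct vertices. -/
def StarWitness.NormalForm {V : Type*} {G : SimpleGraph V} {k : ℕ}
    (W : StarWitness G k) : Prop :=
  Function.Injective W.w ∧
    ∀ x u₁ u₂ : V, u₁ ≠ u₂ → 2 * W.w x ≠ W.w u₁ + W.w u₂

/-- The graph obtained from `G` by attaching, for each `x : X`, a new pendant vertex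
adjacent exactly to `p x`. -/
def addPendants {V X : Type*} (G : SimpleGraph V) (p : X → V) : SimpleGraph (V ⊕ X) where
  Adj a b :=
    match a, b with
    | Sum.inl u, Sum.inl v => G.Adj u v
    | Sum.inl u, Sum.inr x => p x = u
    | Sum.inr x, Sum.inl u => p x = u
    | Sum.inr _, Sum.inr _ => False
  symm := by
    constructor
    rintro (u | x) (v | y) h
    · exact h.symm
    · exact h
    · exact h
    · exact h
  loopless := by
    constructor
    rintro (u | x) h
    · exact G.irrefl h
    · exact h

/-!
Every finite graph has a witness (weights `3 ^ i` make a pair sum determine the pair, so the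
edge sums can serve as degenerate intervals), hence `γ(G)` is attained by some witness. Perturbing
its weights to `w + t • f` with `f` injective and `t > 0` small and generic makes them injective,
at the price of widening every interval slightly to the right.

Now let `M` bound all weights and all intervals and put `C = 3M + 1`. Give the pendant `x` the
weight `C - w (p x)` and append the degenerate interval `[C, C]`: the sum of `x` with an old
vertex `u` exceeds every old interval and equals `C` exactly when `w u = w (p x)`, i.e. `u = p x`,
while two pendants have sum larger than `C`.
-/

open Filter Topology

lemma Nat.log_pow_add_pow {b i j : ℕ} (hb : 3 ≤ b) (hij : i ≤ j) :
    Nat.log b (b ^ i + b ^ j) = j := by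
  refine Nat.log_eq_of_pow_le_of_lt_pow (Nat.le_add_left _ _) ?_
  calc b ^ i + b ^ j ≤ 2 * b ^ j := by have := Nat.pow_le_pow_right (by omega) hij (n := b); omega
    _ < b * b ^ j := Nat.mul_lt_mul_of_pos_right (by omega) (by positivity)
    _ = b ^ (j + 1) := by ring

lemma Nat.pow_add_pow_eq_pow_add_pow {b i j i' j' : ℕ} (hb : 3 ≤ b)
    (h : b ^ i + b ^ j = b ^ i' + b ^ j') : (i = i' ∧ j = j') ∨ (i = j' ∧ j = i') := by
  have sort : ∀ i j, b ^ i + b ^ j = b ^ min i j + b ^ max i j := by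
    intro i j
    rcases le_total i j with h | h <;> simp [h, add_comm]
  have hmax : max i j = max i' j' := by
    rw [← Nat.log_pow_add_pow hb (min_le_max (a := i)), ← sort, h, sort,
      Nat.log_pow_add_pow hb min_le_max]
  have hmin : min i j = min i' j' := by
    refine Nat.pow_right_injective (le_of_lt hb) (?_ : b ^ min i j = b ^ min i' j')
    rw [sort i j, sort i' j', hmax] at h
    omega
  omega

lemma tendsto_add_mul_nhds_zero (x c : ℝ) : Tendsto (fun t => x + t * c) (𝓝 0) (𝓝 x) := by
  simpa using (tendsto_const_nhds (x := x)).add ((tendsto_id (x := 𝓝 (0 : ℝ))).mul_const c)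

lemma eventually_add_mul_lt {x y : ℝ} (h : x < y) (c d : ℝ) :
    ∀ᶠ t in 𝓝[>] (0 : ℝ), x + t * c < y + t * d :=
  ((tendsto_add_mul_nhds_zero x c).eventually_lt (tendsto_add_mul_nhds_zero y d) h).filter_mono
    nhdsWithin_le_nhds

lemma eventually_add_mul_ne {c d : ℝ} (hcd : c ≠ d) (x y : ℝ) :
    ∀ᶠ t in 𝓝[>] (0 : ℝ), x + t * c ≠ y + t * d := by
  rcases lt_trichotomy x y with h | rfl | h
  · exact (eventually_add_mul_lt h c d).mono fun _ => ne_of_lt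
  · filter_upwards [self_mem_nhdsWithin] with t (ht : 0 < t) h
    exact hcd (mul_left_cancel₀ ht.ne' (add_left_cancel h))
  · exact (eventually_add_mul_lt h d c).mono fun _ => ne_of_gt

section Pendants

variable {V X : Type*} {G : SimpleGraph V} {p : X → V}

@[simp]
lemma addPendants_adj_inl_inl {u v : V} : (addPendants G p).Adj (.inl u) (.inl v) ↔ G.Adj u v :=
  Iff.rfl

@[simp]
lemma addPendants_adj_inl_inr {u : V} {x : X} :
    (addPendants G p).Adj (.inl u) (.inr x) ↔ p x = u :=
  Iff.rfl

@[simp]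
lemma addPendants_adj_inr_inl {u : V} {x : X} :
    (addPendants G p).Adj (.inr x) (.inl u) ↔ p x = u :=
  Iff.rfl

@[simp]
lemma addPendants_not_adj_inr_inr {x y : X} : ¬ (addPendants G p).Adj (.inr x) (.inr y) :=
  id

lemma exists_snoc_le_le_snoc_iff {k : ℕ} (a b : Fin k → ℝ) (c s : ℝ) :
    (∃ i : Fin (k + 1), (Fin.snoc a c : Fin (k + 1) → ℝ) i ≤ s ∧
      s ≤ (Fin.snoc b c : Fin (k + 1) → ℝ) i) ↔
    (∃ i, a i ≤ s ∧ s ≤ b i) ∨ s = c := by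
  simp [Fin.exists_fin_succ', le_antisymm_iff, and_comm]

end Pendants

namespace StarWitness

variable {V X : Type*} {G : SimpleGraph V} {k : ℕ}

lemma nonempty_of_adj_iff_add_mem {w : V → ℝ} (hw : ∀ v, 0 < w v) (S : Finset ℝ)
    (hS : ∀ s ∈ S, 0 < s) (hadj : ∀ u v, u ≠ v → (G.Adj u v ↔ w u + w v ∈ S)) :
    Nonempty (StarWitness G S.card) := by
  let c := S.orderEmbOfFin rfl
  refine ⟨⟨w, c, c, hw, fun i => hS _ (S.orderEmbOfFin_mem rfl i), fun i => le_rfl,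
    fun i j hij => c.strictMono hij, fun u v huv => ?_⟩⟩
  simp only [← le_antisymm_iff, hadj u v huv]
  rw [← Finset.mem_coe, ← S.range_orderEmbOfFin rfl, Set.mem_range]

lemma lt_or_lt_of_not_adj (W : StarWitness G k) {u v : V} (huv : u ≠ v) (hn : ¬ G.Adj u v)
    (i : Fin k) : W.w u + W.w v < W.a i ∨ W.b i < W.w u + W.w v := by
  refine (lt_or_ge _ _).imp_right fun hai => ?_
  by_contra! hb
  exact hn ((W.adj_iff u v huv).mpr ⟨i, hai, hb⟩)

def perturb (W : StarWitness G k) {g : V → ℝ} (hg : ∀ v, 0 ≤ g v) {δ : ℝ} (hδ : 0 ≤ δ)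
    (hgδ : ∀ u v, g u + g v ≤ δ) (hord : ∀ i j, i < j → W.b i + δ < W.a j)
    (hsep : ∀ u v, u ≠ v → ¬ G.Adj u v → ∀ i,
      W.w u + W.w v + (g u + g v) < W.a i ∨ W.b i + δ < W.w u + W.w v + (g u + g v)) :
    StarWitness G k where
  w v := W.w v + g v
  a := W.a
  b i := W.b i + δ
  w_pos v := add_pos_of_pos_of_nonneg (W.w_pos v) (hg v)
  a_pos := W.a_pos
  a_le_b i := le_add_of_le_of_nonneg (W.a_le_b i) hδ
  ordered := hord
  adj_iff u v huv := by
    constructor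
    · intro hadj
      obtain ⟨i, h₁, h₂⟩ := (W.adj_iff u v huv).mp hadj
      exact ⟨i, by linarith [hg u, hg v], by linarith [hgδ u v]⟩
    · rintro ⟨i, h₁, h₂⟩
      by_contra hn
      rcases hsep u v huv hn i with h | h <;> linarith

theorem exists_injective [Finite V] (W : StarWitness G k) :
    ∃ W' : StarWitness G k, Function.Injective W'.w := by
  obtain ⟨n, ⟨e⟩⟩ := Finite.exists_equiv_fin V
  let f : V → ℝ := fun v => (e v : ℕ)
  have hf : ∀ v, 0 ≤ f v := fun v => Nat.cast_nonneg _
  have hfn : ∀ v, f v ≤ n := fun v => Nat.cast_le.mpr (e v).isLt.le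
  have hfinj : Function.Injective f := fun u v h => e.injective (Fin.ext (Nat.cast_injective h))
  have hgood : ∀ᶠ t in 𝓝[>] (0 : ℝ), 0 < t ∧
      (∀ i j, i < j → W.b i + t * (2 * n) < W.a j) ∧
      (∀ u v, u ≠ v → ¬ G.Adj u v → ∀ i, W.w u + W.w v + (t * f u + t * f v) < W.a i ∨
        W.b i + t * (2 * n) < W.w u + W.w v + (t * f u + t * f v)) ∧
      ∀ u v, u ≠ v → W.w u + t * f u ≠ W.w v + t * f v := by
    simp only [eventually_and, eventually_all]
    refine ⟨self_mem_nhdsWithin, fun i j hij => ?_, fun u v huv hn i => ?_, fun u v huv =>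
      eventually_add_mul_ne (hfinj.ne huv) _ _⟩
    · simpa using eventually_add_mul_lt (W.ordered i j hij) (2 * n) 0
    · rcases W.lt_or_lt_of_not_adj huv hn i with h | h
      · exact (eventually_add_mul_lt h (f u + f v) 0).mono fun t ht => Or.inl (by linarith)
      · exact (eventually_add_mul_lt h (2 * n) (f u + f v)).mono fun t ht => Or.inr (by linarith)
  obtain ⟨t, ht, hord, hsep, hne⟩ := hgood.exists
  refine ⟨W.perturb (g := fun v => t * f v) (fun v => mul_nonneg ht.le (hf v)) (by positivity)
    (fun u v => ?_) hord hsep, fun u v h => by_contra fun huv => hne u v huv h⟩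
  rw [← mul_add]
  exact mul_le_mul_of_nonneg_left (by linarith [hfn u, hfn v]) ht.le

lemma exists_bound [Finite V] (W : StarWitness G k) :
    ∃ M, 0 ≤ M ∧ (∀ v, W.w v ≤ M) ∧ ∀ i, W.b i ≤ M := by
  obtain ⟨Mw, hw⟩ := Finite.exists_le W.w
  obtain ⟨Mb, hb⟩ := Finite.exists_le W.b
  exact ⟨max 0 (max Mw Mb), le_max_left _ _, fun v => (hw v).trans (by simp),
    fun i => (hb i).trans (by simp)⟩

def withPendants (W : StarWitness G k) (hinj : Function.Injective W.w) (p : X → V) {M : ℝ}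
    (hM : 0 ≤ M) (hMw : ∀ v, W.w v ≤ M) (hMb : ∀ i, W.b i ≤ M) :
    StarWitness (addPendants G p) (k + 1) where
  w := Sum.elim W.w fun x => 3 * M + 1 - W.w (p x)
  a := Fin.snoc W.a (3 * M + 1)
  b := Fin.snoc W.b (3 * M + 1)
  w_pos := by
    rintro (v | x)
    · exact W.w_pos v
    · simp only [Sum.elim_inr]
      linarith [hMw (p x)]
  a_pos i := by
    induction i using Fin.lastCases <;> simp [W.a_pos]
    linarith
  a_le_b i := by
    induction i using Fin.lastCases <;> simp [W.a_le_b]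
  ordered i j hij := by
    induction j using Fin.lastCases with
    | last =>
      obtain ⟨i, rfl⟩ := Fin.exists_castSucc_eq.mpr hij.ne
      simpa using (hMb i).trans_lt (by linarith)
    | cast j =>
      induction i using Fin.lastCases with
      | last => exact absurd hij (Fin.castSucc_lt_last j).not_gt
      | cast i => simpa using W.ordered i j (Fin.castSucc_lt_castSucc_iff.mp hij)
  adj_iff := by
    have mixed : ∀ u y, p y = u ↔
        (∃ i, W.a i ≤ W.w u + (3 * M + 1 - W.w (p y)) ∧ W.w u + (3 * M + 1 - W.w (p y)) ≤ W.b i) ∨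
          W.w u + (3 * M + 1 - W.w (p y)) = 3 * M + 1 := by
      intro u y
      rw [or_iff_right fun ⟨i, _, h⟩ => by linarith [hMb i, hMw (p y), W.w_pos u]]
      exact ⟨fun h => by rw [h]; ring, fun h => hinj (by linarith)⟩
    rintro (u | x) (v | y) huv <;>
      simp only [addPendants_adj_inl_inl, addPendants_adj_inl_inr, addPendants_adj_inr_inl,
        addPendants_not_adj_inr_inr, Sum.elim_inl, Sum.elim_inr, exists_snoc_le_le_snoc_iff]
    · rw [W.adj_iff u v fun h => huv (congrArg _ h), or_iff_left]
      linarith [hMw u, hMw v]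
    · exact mixed u y
    · rw [add_comm]
      exact mixed v x
    · simp only [false_iff, not_or, not_exists, not_and]
      exact ⟨fun i _ h => by linarith [hMw (p x), hMw (p y), hMb i],
        by linarith [hMw (p x), hMw (p y)]⟩

end StarWitness

section StarNumber

variable {V : Type*}

lemma exists_starWitness [Fintype V] (G : SimpleGraph V) :
    ∃ k, 0 < k ∧ Nonempty (StarWitness G k) := by
  classical
  obtain ⟨e⟩ := Fintype.truncEquivFin V
  let w : V → ℝ := fun v => (3 : ℝ) ^ (e v : ℕ)
  have hw : ∀ v, 1 ≤ w v := fun v => one_le_pow₀ (by norm_num)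
  -- `1` is below every pair sum; it only makes the family of intervals nonempty.
  let S := insert 1 ((Finset.univ.filter fun q : V × V => G.Adj q.1 q.2).image
    fun q => w q.1 + w q.2)
  refine ⟨S.card, Finset.card_pos.mpr (Finset.insert_nonempty _ _),
    StarWitness.nonempty_of_adj_iff_add_mem (fun v => one_pos.trans_le (hw v)) S ?_
      fun u v _ => ?_⟩
  · simp only [S, Finset.mem_insert, Finset.mem_image]
    rintro s (rfl | ⟨q, -, rfl⟩)
    · exact one_pos
    · linarith [hw q.1, hw q.2]
  simp only [S, Finset.mem_insert, Finset.mem_image, Finset.mem_filter, Finset.mem_univ, true_and]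
  constructor
  · exact fun h => Or.inr ⟨(u, v), h, rfl⟩
  rintro (h | ⟨⟨u', v'⟩, hadj, h⟩)
  · linarith [hw u, hw v]
  have h : 3 ^ (e u' : ℕ) + 3 ^ (e v' : ℕ) = 3 ^ (e u : ℕ) + 3 ^ (e v : ℕ) := by
    simp only [w] at h
    exact_mod_cast h
  rcases Nat.pow_add_pow_eq_pow_add_pow le_rfl h with ⟨hu, hv⟩ | ⟨hu, hv⟩
  · rwa [← e.injective (Fin.ext hu), ← e.injective (Fin.ext hv)]
  · rwa [← e.injective (Fin.ext hu), ← e.injective (Fin.ext hv), SimpleGraph.adj_comm]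

lemma starNumber_spec [Fintype V] (G : SimpleGraph V) :
    0 < starNumber G ∧ Nonempty (StarWitness G (starNumber G)) :=
  Nat.sInf_mem (exists_starWitness G)

lemma starNumber_le {G : SimpleGraph V} {k : ℕ} (W : StarWitness G k) (hk : 0 < k) :
    starNumber G ≤ k :=
  Nat.sInf_le ⟨hk, ⟨W⟩⟩

end StarNumber

theorem stmt_10_general {V X : Type*} [Fintype V]
    (G : SimpleGraph V) (p : X → V) (k : ℕ)
    (hg : starNumber G = k) :
    starNumber (addPendants G p) ≤ k + 1 := by
  obtain ⟨-, ⟨W⟩⟩ := hg ▸ starNumber_spec G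
  obtain ⟨W, hinj⟩ := W.exists_injective
  obtain ⟨M, hM, hMw, hMb⟩ := W.exists_bound
  exact starNumber_le (W.withPendants hinj p hM hMw hMb) k.succ_pos

/-- Theorem 10 (general case): adding pendant vertices increases the star number by
at most one. -/
theorem stmt_10 {V X : Type*} [Fintype V] [Fintype X] [Nonempty X]
    (G : SimpleGraph V) (p : X → V) (k : ℕ)
    (hg : starNumber G = k) :
    starNumber (addPendants G p) ≤ k + 1 :=
  stmt_10_general G p k hg
end

section
/- Let G be a finite simple graph. Then the complement Ḡ of G satisfies γ(Ḡ) ≤ γ(G) + 1. -/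
open SimpleGraph

set_option linter.unusedSectionVars false
open Classical

noncomputable section ComplConstruction

variable {V : Type*} [Fintype V] {G : SimpleGraph V} {k : ℕ} (W : StarWitness G k)

/-- Left endpoints of intervals are monotone. -/
lemma StarWitness.a_mono {p q : Fin k} (h : p ≤ q) : W.a p ≤ W.a q := by
  rcases lt_or_eq_of_le h with h | h
  · exact (W.a_le_b p).trans (W.ordered p q h).le
  · rw [h]

/-- Right endpoints of intervals are monotone. -/
lemma StarWitness.b_mono {p q : Fin k} (h : p ≤ q) : W.b p ≤ W.b q := by
  rcases lt_or_eq_of_le h with h | h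
  · exact (W.ordered p q h).le.trans (W.a_le_b q)
  · rw [h]

lemma StarWitness.a_le_b_of_le {p q : Fin k} (h : p ≤ q) : W.a p ≤ W.b q :=
  (W.a_mono h).trans (W.a_le_b q)

/-- The set of sums of weights of distinct non-adjacent pairs. -/
def sumsT : Finset ℝ :=
  (Finset.univ.filter (fun p : V × V => p.1 ≠ p.2 ∧ ¬ G.Adj p.1 p.2)).image
    (fun p => W.w p.1 + W.w p.2)

lemma mem_sumsT {u v : V} (hne : u ≠ v) (hadj : ¬ G.Adj u v) :
    W.w u + W.w v ∈ sumsT W := by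
  refine Finset.mem_image.2 ⟨(u, v), Finset.mem_filter.2 ⟨Finset.mem_univ _, hne, hadj⟩, rfl⟩

/-- Lower boundary of the `i`-th gap. -/
def Lb (i : Fin (k + 1)) : ℝ :=
  if h : (i : ℕ) = 0 then 0 else W.b ⟨(i : ℕ) - 1, by have := i.isLt; omega⟩

/-- `x` lies in the `i`-th open gap between intervals. -/
def InGap (i : Fin (k + 1)) (x : ℝ) : Prop :=
  Lb W i < x ∧ ∀ h : (i : ℕ) < k, x < W.a ⟨(i : ℕ), h⟩

lemma Lb_nonneg (i : Fin (k + 1)) : 0 ≤ Lb W i := by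
  unfold Lb
  split
  · exact le_rfl
  · exact ((W.a_pos _).trans_le (W.a_le_b _)).le

lemma Lb_lt_a (i : Fin (k + 1)) (h : (i : ℕ) < k) : Lb W i < W.a ⟨(i : ℕ), h⟩ := by
  unfold Lb
  split
  next h0 => exact W.a_pos _
  next h0 =>
    exact W.ordered _ _ (by simp only [Fin.mk_lt_mk]; omega)

/-- Default point inside the `i`-th gap. -/
def cpt (i : Fin (k + 1)) : ℝ :=
  if h : (i : ℕ) < k then (Lb W i + W.a ⟨(i : ℕ), h⟩) / 2 else Lb W i + 1

lemma cpt_mem (i : Fin (k + 1)) : InGap W i (cpt W i) := by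
  unfold cpt
  split
  next h =>
    have := Lb_lt_a W i h
    exact ⟨by linarith, fun h' => by linarith⟩
  next h => exact ⟨by linarith, fun h' => absurd h' h⟩

lemma gap_convex {i : Fin (k + 1)} {x y z : ℝ} (hx : InGap W i x) (hy : InGap W i y)
    (h1 : x ≤ z) (h2 : z ≤ y) : InGap W i z :=
  ⟨hx.1.trans_le h1, fun h => h2.trans_lt (hy.2 h)⟩

lemma gap_lt_gap {i j : Fin (k + 1)} (hij : i < j) {x y : ℝ}
    (hx : InGap W i x) (hy : InGap W j y) : x < y := by
  have hik : (i : ℕ) < k := by have := j.isLt; have := (Fin.lt_def.1 hij); omega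
  have hx' : x < W.a ⟨(i : ℕ), hik⟩ := hx.2 hik
  have hj0 : ¬ ((j : ℕ) = 0) := by have := Fin.lt_def.1 hij; omega
  have hy' : W.b ⟨(j : ℕ) - 1, by have := j.isLt; omega⟩ < y := by
    have := hy.1
    unfold Lb at this
    rwa [dif_neg hj0] at this
  have hle : W.a ⟨(i : ℕ), hik⟩ ≤ W.b ⟨(j : ℕ) - 1, by have := j.isLt; omega⟩ :=
    W.a_le_b_of_le (by simp [Fin.le_def]; have := Fin.lt_def.1 hij; omega)
  linarith

lemma gap_disjoint {i : Fin (k + 1)} {x : ℝ} (hx : InGap W i x) (j : Fin k) :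
    ¬ (W.a j ≤ x ∧ x ≤ W.b j) := by
  rintro ⟨h1, h2⟩
  rcases le_or_gt (i : ℕ) (j : ℕ) with h | h
  · have hik : (i : ℕ) < k := lt_of_le_of_lt h j.isLt
    have : x < W.a ⟨(i : ℕ), hik⟩ := hx.2 hik
    have : W.a ⟨(i : ℕ), hik⟩ ≤ W.a j := W.a_mono (by simpa [Fin.le_def] using h)
    linarith [hx.2 hik]
  · have hi0 : ¬ ((i : ℕ) = 0) := by omega
    have hlt : W.b ⟨(i : ℕ) - 1, by have := i.isLt; omega⟩ < x := by
      have := hx.1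
      unfold Lb at this
      rwa [dif_neg hi0] at this
    have : W.b j ≤ W.b ⟨(i : ℕ) - 1, by have := i.isLt; omega⟩ :=
      W.b_mono (by simp [Fin.le_def]; omega)
    linarith

/-- Every positive number outside all intervals lies in some gap. -/
lemma exists_gap {s : ℝ} (hs : 0 < s) (hout : ∀ j : Fin k, ¬ (W.a j ≤ s ∧ s ≤ W.b j)) :
    ∃ i : Fin (k + 1), InGap W i s := by
  set F : Finset (Fin k) := Finset.univ.filter (fun j => W.b j < s) with hF
  by_cases hFne : F.Nonempty
  · set m := F.max' hFne with hm
    have hmF : m ∈ F := F.max'_mem hFne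
    have hbm : W.b m < s := (Finset.mem_filter.1 hmF).2
    refine ⟨⟨(m : ℕ) + 1, by have := m.isLt; omega⟩, ?_, ?_⟩
    · unfold Lb
      rw [dif_neg (by simp)]
      simpa using hbm
    · intro h
      set j : Fin k := ⟨(m : ℕ) + 1, h⟩ with hj
      have hjF : j ∉ F := by
        intro hjF
        have := F.le_max' j hjF
        rw [← hm] at this
        have := Fin.le_def.1 this
        simp [hj] at this
      have hsb : s ≤ W.b j := by
        by_contra hc
        exact hjF (Finset.mem_filter.2 ⟨Finset.mem_univ _, by linarith⟩)
      have := hout j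
      have : ¬ (W.a j ≤ s) := fun hc => this ⟨hc, hsb⟩
      simpa using lt_of_not_ge this
  · refine ⟨⟨0, by omega⟩, ?_, ?_⟩
    · unfold Lb; rw [dif_pos rfl]; exact hs
    · intro h
      set j : Fin k := ⟨0, h⟩ with hj
      have hjF : j ∉ F := fun hjF => hFne ⟨j, hjF⟩
      have hsb : s ≤ W.b j := by
        by_contra hc
        exact hjF (Finset.mem_filter.2 ⟨Finset.mem_univ _, by linarith⟩)
      have h1 := hout j
      have : ¬ (W.a j ≤ s) := fun hc => h1 ⟨hc, hsb⟩
      simpa using lt_of_not_ge this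

/-- Sums of non-adjacent pairs lying in the `i`-th gap. -/
def Ti (i : Fin (k + 1)) : Finset ℝ := (sumsT W).filter (InGap W i)

def newa (i : Fin (k + 1)) : ℝ :=
  if h : (Ti W i).Nonempty then (Ti W i).min' h else cpt W i

def newb (i : Fin (k + 1)) : ℝ :=
  if h : (Ti W i).Nonempty then (Ti W i).max' h else cpt W i

lemma newa_mem_gap (i : Fin (k + 1)) : InGap W i (newa W i) := by
  unfold newa
  split
  next h => exact (Finset.mem_filter.1 ((Ti W i).min'_mem h)).2
  next h => exact cpt_mem W i

lemma newb_mem_gap (i : Fin (k + 1)) : InGap W i (newb W i) := by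
  unfold newb
  split
  next h => exact (Finset.mem_filter.1 ((Ti W i).max'_mem h)).2
  next h => exact cpt_mem W i

lemma newa_le_newb (i : Fin (k + 1)) : newa W i ≤ newb W i := by
  unfold newa newb
  split
  next h => exact (Ti W i).min'_le _ ((Ti W i).max'_mem h)
  next h => exact le_rfl

/-- The complement witness. -/
def complWitness : StarWitness Gᶜ (k + 1) where
  w := W.w
  a := newa W
  b := newb W
  w_pos := W.w_pos
  a_pos := fun i => lt_of_le_of_lt (Lb_nonneg W i) (newa_mem_gap W i).1
  a_le_b := newa_le_newb W
  ordered := fun i j hij => gap_lt_gap W hij (newb_mem_gap W i) (newa_mem_gap W j)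
  adj_iff := by
    intro u v hne
    constructor
    · intro hadj
      have hGadj : ¬ G.Adj u v := (G.compl_adj u v |>.1 hadj).2
      have hout : ∀ j : Fin k, ¬ (W.a j ≤ W.w u + W.w v ∧ W.w u + W.w v ≤ W.b j) := by
        intro j hj
        exact hGadj ((W.adj_iff u v hne).2 ⟨j, hj⟩)
      have hpos : 0 < W.w u + W.w v := by linarith [W.w_pos u, W.w_pos v]
      obtain ⟨i, hi⟩ := exists_gap W hpos hout
      have hmem : W.w u + W.w v ∈ Ti W i :=
        Finset.mem_filter.2 ⟨mem_sumsT W hne hGadj, hi⟩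
      have hTne : (Ti W i).Nonempty := ⟨_, hmem⟩
      refine ⟨i, ?_, ?_⟩
      · unfold newa; rw [dif_pos hTne]; exact (Ti W i).min'_le _ hmem
      · unfold newb; rw [dif_pos hTne]; exact (Ti W i).le_max' _ hmem
    · rintro ⟨i, h1, h2⟩
      have hgap : InGap W i (W.w u + W.w v) :=
        gap_convex W (newa_mem_gap W i) (newb_mem_gap W i) h1 h2
      refine (G.compl_adj u v).2 ⟨hne, fun hadj => ?_⟩
      obtain ⟨j, hj⟩ := (W.adj_iff u v hne).1 hadj
      exact gap_disjoint W hgap j hj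

end ComplConstruction

/-- Theorem 13(iii): the star number of the complement of a graph is at most the star
number of the graph plus one. -/
theorem stmt_16 {V : Type*} [Fintype V] (G : SimpleGraph V) :
    starNumber Gᶜ ≤ starNumber G + 1 := by
  by_cases hS : {k | 0 < k ∧ Nonempty (StarWitness G k)}.Nonempty
  · have hmem := Nat.sInf_mem hS
    obtain ⟨hpos, ⟨Wit⟩⟩ := hmem
    have : starNumber G + 1 ∈ {k | 0 < k ∧ Nonempty (StarWitness Gᶜ k)} :=
      ⟨by omega, ⟨complWitness Wit⟩⟩
    exact Nat.sInf_le this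
  · have hSc : {k | 0 < k ∧ Nonempty (StarWitness Gᶜ k)} = ∅ := by
      by_contra hc
      obtain ⟨m, hm, ⟨Wc⟩⟩ := Set.nonempty_iff_ne_empty.2 hc
      have : Nonempty (StarWitness G (m + 1)) := by
        have h := complWitness Wc
        rw [compl_compl] at h
        exact ⟨h⟩
      exact hS ⟨m + 1, by omega, this⟩
    unfold starNumber
    rw [hSc]
    simp
end
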